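/- Let ℰ be a Hilbert 𝒜-module over a C*-algebra 𝒜, and let ℋ and 𝒦 be closed submodules of ℰ such that ℋ ∩ 𝒦 is orthogonally complemented in ℰ. Let {ω_j}_{j≥1} be positive linear functionals on 𝒜 with sup_j ‖ω_j‖ < ∞ such that, for each j, the closure of ι_{ω_j}(ℋ ∩ 𝒦) in ℰ_{ω_j} equals the intersection of the closures of ι_{ω_j}(ℋ) and ι_{ω_j}(𝒦) in ℰ_{ω_j}. Then for every ω in the σ-convex hull of {ω_1, ω_2, …}, the closure of ι_ω(ℋ ∩ 𝒦) in ℰ_ω equals the intersection of the closures of ι_ω(ℋ) and ι_ω(𝒦) in ℰ_ω. -/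

import Mathlib

open scoped ComplexOrder InnerProductSpace RightActions

universe v

/-- The Hilbert C⋆-module class as it stood in Mathlib of December 2024 (right `Aᵐᵒᵖ`-action),
restated here because Mathlib's `CStarModule` now uses a left `A`-action. -/
class CStarModuleRight (A E : Type*) [NonUnitalSemiring A] [StarRing A]
    [Module ℂ A] [AddCommGroup E] [Module ℂ E] [PartialOrder A] [SMul Aᵐᵒᵖ E] [Norm A] [Norm E]
    extends Inner A E where
  inner_add_right {x} {y} {z} : inner x (y + z) = inner x y + inner x z
  inner_self_nonneg {x} : 0 ≤ inner x x
  inner_self {x} : inner x x = 0 ↔ x = 0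
  inner_op_smul_right {a : A} {x y : E} : inner x (y <• a) = inner x y * a
  inner_smul_right_complex {z : ℂ} {x} {y} : inner x (z • y) = z • inner x y
  star_inner x y : star (inner x y) = inner y x
  norm_eq_sqrt_norm_inner_self x : ‖x‖ = √‖inner x x‖


/-! The localization at `ω = ∑ λ_j ω_j` dominates each localization at `ω_j`, since
`λ_j ‖ι_j x‖² ≤ ‖ι x‖²`; so `ι_j` factors as `T_j ∘ ι` with `T_j : ℰ_ω → ℰ_{ω_j}` bounded, and
`∑ λ_j ‖T_j u‖² ≤ ‖u‖²`. If `v` lies in the closures of `ι ℋ` and `ι 𝒦`, then `T_j v` lies in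
those of `ι_j ℋ` and `ι_j 𝒦`, hence by hypothesis in that of `ι_j (ℋ ∩ 𝒦)`. For
`z ⊥ ℋ ∩ 𝒦` this makes `⟪ι_j z, T_j v⟫ = 0` for every `j`, and Cauchy–Schwarz in the weighted
sum `⟪ι z, ι x⟫ = ∑ λ_j ⟪ι_j z, T_j (ι x - v)⟫` gives `‖⟪ι z, ι x⟫‖ ≤ ‖ι z‖ ‖ι x - v‖`, so
`ι z ⊥ v`. Finally `ℰ = (ℋ ∩ 𝒦) ⊕ (ℋ ∩ 𝒦)^⊥` and the density of `ι ℰ` force a vector orthogonal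
to `ι ((ℋ ∩ 𝒦)^⊥)` into the closure of `ι (ℋ ∩ 𝒦)`. -/

theorem mem_closure_image_of_forall_inner_eq_zero {𝕜 E F : Type*} [RCLike 𝕜] [AddCommGroup E]
    [Module 𝕜 E] [NormedAddCommGroup F] [InnerProductSpace 𝕜 F] {ι : E →ₗ[𝕜] F}
    (hι : DenseRange ι) {L S : Set E} (hdecomp : ∀ x, ∃ y ∈ L, ∃ z ∈ S, x = y + z)
    (horth : ∀ y ∈ L, ∀ z ∈ S, ⟪ι y, ι z⟫_𝕜 = 0) {v : F} (hv : ∀ z ∈ S, ⟪ι z, v⟫_𝕜 = 0) :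
    v ∈ closure (ι '' L) := by
  refine Metric.mem_closure_iff.mpr fun ε hε => ?_
  obtain ⟨_, ⟨x, rfl⟩, hx⟩ := Metric.mem_closure_iff.mp (hι v) ε hε
  obtain ⟨y, hy, z, hz, rfl⟩ := hdecomp x
  refine ⟨ι y, ⟨y, hy, rfl⟩, lt_of_le_of_lt ?_ hx⟩
  have hperp : ⟪v - ι y, -ι z⟫_𝕜 = 0 := by
    rw [inner_neg_right, inner_sub_left, inner_eq_zero_symm.mp (hv z hz), horth y hy z hz,
      sub_zero, neg_zero]
  have hpyth := norm_add_sq_eq_norm_sq_add_norm_sq_of_inner_eq_zero _ _ hperp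
  rw [dist_eq_norm, dist_eq_norm, map_add, ← sub_sub, sub_eq_add_neg (v - ι y)]
  exact (mul_self_le_mul_self_iff (norm_nonneg _) (norm_nonneg _)).mpr
    (hpyth ▸ le_add_of_nonneg_right (mul_self_nonneg _))

section WeightedInnerSum

variable {𝕜 E F β : Type*} {G : β → Type*} [RCLike 𝕜] [AddCommGroup E] [Module 𝕜 E]
  [NormedAddCommGroup F] [InnerProductSpace 𝕜 F]
  [∀ j, NormedAddCommGroup (G j)] [∀ j, InnerProductSpace 𝕜 (G j)]

def HasWeightedInnerSum (c : β → ℝ) (κ : ∀ j, E →ₗ[𝕜] G j) (ι : E →ₗ[𝕜] F) : Prop :=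
  ∀ x y, HasSum (fun j => (c j : 𝕜) * ⟪κ j x, κ j y⟫_𝕜) ⟪ι x, ι y⟫_𝕜

variable {c : β → ℝ} {κ : ∀ j, E →ₗ[𝕜] G j} {ι : E →ₗ[𝕜] F}

theorem norm_sum_mul_inner_sq_le (hc : ∀ j, 0 ≤ c j) (s : Finset β) (a b : ∀ j, G j) :
    ‖∑ j ∈ s, (c j : 𝕜) * ⟪a j, b j⟫_𝕜‖ ^ 2 ≤
      (∑ j ∈ s, c j * ‖a j‖ ^ 2) * ∑ j ∈ s, c j * ‖b j‖ ^ 2 := by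
  have hterm (j : β) : ‖(c j : 𝕜) * ⟪a j, b j⟫_𝕜‖ ≤ c j * ‖a j‖ * ‖b j‖ := by
    rw [norm_mul, RCLike.norm_ofReal, abs_of_nonneg (hc j), mul_assoc]
    exact mul_le_mul_of_nonneg_left (norm_inner_le_norm _ _) (hc j)
  calc ‖∑ j ∈ s, (c j : 𝕜) * ⟪a j, b j⟫_𝕜‖ ^ 2
      ≤ (∑ j ∈ s, c j * ‖a j‖ * ‖b j‖) ^ 2 := by
        gcongr
        exact (norm_sum_le _ _).trans (Finset.sum_le_sum fun j _ => hterm j)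
    _ ≤ _ := Finset.sum_sq_le_sum_mul_sum_of_sq_le_mul s
        (fun j _ => mul_nonneg (hc j) (sq_nonneg _)) (fun j _ => mul_nonneg (hc j) (sq_nonneg _))
        (fun j _ => le_of_eq (by ring))

theorem HasWeightedInnerSum.hasSum_mul_norm_sq (h : HasWeightedInnerSum c κ ι) (x : E) :
    HasSum (fun j => c j * ‖κ j x‖ ^ 2) (‖ι x‖ ^ 2) := by
  have := h x x
  simp only [inner_self_eq_norm_sq_to_K, ← RCLike.ofReal_pow, ← RCLike.ofReal_mul] at this
  exact (RCLike.hasSum_ofReal 𝕜).mp this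

theorem HasWeightedInnerSum.sum_mul_norm_sq_le (h : HasWeightedInnerSum c κ ι)
    (hc : ∀ j, 0 ≤ c j) (s : Finset β) (x : E) : ∑ j ∈ s, c j * ‖κ j x‖ ^ 2 ≤ ‖ι x‖ ^ 2 :=
  sum_le_hasSum s (fun j _ => mul_nonneg (hc j) (sq_nonneg _)) (h.hasSum_mul_norm_sq x)

theorem HasWeightedInnerSum.norm_apply_le (h : HasWeightedInnerSum c κ ι) (hc : ∀ j, 0 < c j)
    (j : β) (x : E) : ‖κ j x‖ ≤ (√(c j))⁻¹ * ‖ι x‖ := by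
  have hj : c j * ‖κ j x‖ ^ 2 ≤ ‖ι x‖ ^ 2 :=
    le_hasSum (h.hasSum_mul_norm_sq x) j fun i _ => mul_nonneg (hc i).le (sq_nonneg _)
  rw [inv_mul_eq_div, le_div_iff₀ (Real.sqrt_pos.mpr (hc j)), mul_comm]
  refine (pow_le_pow_iff_left₀ (by positivity) (norm_nonneg _) two_ne_zero).mp ?_
  rwa [mul_pow, Real.sq_sqrt (hc j).le]

variable [∀ j, CompleteSpace (G j)]

theorem HasWeightedInnerSum.extendOfNorm_apply (h : HasWeightedInnerSum c κ ι)
    (hc : ∀ j, 0 < c j) (hι : DenseRange ι) (j : β) (x : E) :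
    (κ j).extendOfNorm ι (ι x) = κ j x :=
  LinearMap.extendOfNorm_eq hι ⟨_, h.norm_apply_le hc j⟩ x

theorem HasWeightedInnerSum.sum_mul_norm_extendOfNorm_sq_le (h : HasWeightedInnerSum c κ ι)
    (hc : ∀ j, 0 < c j) (hι : DenseRange ι) (s : Finset β) (u : F) :
    ∑ j ∈ s, c j * ‖(κ j).extendOfNorm ι u‖ ^ 2 ≤ ‖u‖ ^ 2 := by
  induction u using hι.induction_on with
  | hp => exact isClosed_le (by fun_prop) (by fun_prop)
  | ih x =>
    simp only [h.extendOfNorm_apply hc hι]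
    exact h.sum_mul_norm_sq_le (fun j => (hc j).le) s x

theorem HasWeightedInnerSum.extendOfNorm_mem_closure_image (h : HasWeightedInnerSum c κ ι)
    (hc : ∀ j, 0 < c j) (hι : DenseRange ι) {S : Set E} {v : F} (hv : v ∈ closure (ι '' S))
    (j : β) : (κ j).extendOfNorm ι v ∈ closure (κ j '' S) := by
  have := image_closure_subset_closure_image ((κ j).extendOfNorm ι).continuous ⟨v, hv, rfl⟩
  rwa [Set.image_image, funext (h.extendOfNorm_apply hc hι j)] at this

theorem HasWeightedInnerSum.inner_eq_zero_of_forall_inner_extendOfNorm_eq_zero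
    (h : HasWeightedInnerSum c κ ι) (hc : ∀ j, 0 < c j) (hι : DenseRange ι) {z : E} {u : F}
    (hzu : ∀ j, ⟪κ j z, (κ j).extendOfNorm ι u⟫_𝕜 = 0) : ⟪ι z, u⟫_𝕜 = 0 := by
  have hbound (x : E) : ‖⟪ι z, ι x⟫_𝕜‖ ≤ ‖ι z‖ * ‖ι x - u‖ := by
    have hsum : HasSum (fun j => (c j : 𝕜) * ⟪κ j z, (κ j).extendOfNorm ι (ι x - u)⟫_𝕜)
        ⟪ι z, ι x⟫_𝕜 := by
      simpa only [map_sub, inner_sub_right, hzu, sub_zero, h.extendOfNorm_apply hc hι]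
        using h z x
    refine le_of_tendsto' hsum.norm fun s => ?_
    refine (pow_le_pow_iff_left₀ (norm_nonneg _) (by positivity) two_ne_zero).mp ?_
    calc _ ≤ _ := norm_sum_mul_inner_sq_le (fun j => (hc j).le) s _ _
      _ ≤ ‖ι z‖ ^ 2 * ‖ι x - u‖ ^ 2 := by
        gcongr
        · exact Finset.sum_nonneg fun j _ => mul_nonneg (hc j).le (sq_nonneg _)
        · exact h.sum_mul_norm_sq_le (fun j => (hc j).le) s z
        · exact h.sum_mul_norm_extendOfNorm_sq_le hc hι s _
      _ = _ := (mul_pow _ _ _).symm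
  have := hι.induction_on (p := fun y => ‖⟪ι z, y⟫_𝕜‖ ≤ ‖ι z‖ * ‖y - u‖) u
    (isClosed_le (by fun_prop) (by fun_prop)) hbound
  simpa using this

theorem HasWeightedInnerSum.inner_eq_zero_of_mem_closure_inter (h : HasWeightedInnerSum c κ ι)
    (hc : ∀ j, 0 < c j) (hι : DenseRange ι) {H K L : Set E}
    (hL : ∀ j, closure (κ j '' H) ∩ closure (κ j '' K) ⊆ closure (κ j '' L)) {z : E}
    (hz : ∀ j, ∀ l ∈ L, ⟪κ j z, κ j l⟫_𝕜 = 0) {v : F} (hvH : v ∈ closure (ι '' H))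
    (hvK : v ∈ closure (ι '' K)) : ⟪ι z, v⟫_𝕜 = 0 := by
  refine h.inner_eq_zero_of_forall_inner_extendOfNorm_eq_zero hc hι fun j => ?_
  have hvL : (κ j).extendOfNorm ι v ∈ closure (κ j '' L) :=
    hL j ⟨h.extendOfNorm_mem_closure_image hc hι hvH j,
      h.extendOfNorm_mem_closure_image hc hι hvK j⟩
  refine closure_minimal (t := {w | ⟪κ j z, w⟫_𝕜 = 0}) ?_
    (isClosed_eq (by fun_prop) (by fun_prop)) hvL
  rintro _ ⟨l, hl, rfl⟩
  exact hz j l hl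

end WeightedInnerSum

theorem closure_inter_localization_of_sigma_convexHull_general
    {A E : Type*} [NonUnitalCStarAlgebra A] [PartialOrder A]
    [NormedAddCommGroup E] [NormedSpace ℂ E] [SMul Aᵐᵒᵖ E] [CStarModuleRight A E]
    -- `ℋ` and `𝒦` are closed submodules of `ℰ`
    (H K : Submodule ℂ E)
    -- `ℋ ∩ 𝒦` is orthogonally complemented in `ℰ`
    (hcompl : ∀ x : E, ∃ y ∈ H ⊓ K, ∃ z : E,
      (∀ w ∈ H ⊓ K, ⟪w, z⟫_A = 0) ∧ x = y + z)
    -- the positive linear functionals `ω_j`, uniformly bounded in norm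
    (ωs : ℕ → (A →L[ℂ] ℂ))
    -- abstract models of the localizations `ℰ_{ω_j}`
    (Fj : ℕ → Type*) [∀ j, NormedAddCommGroup (Fj j)] [∀ j, InnerProductSpace ℂ (Fj j)]
    [∀ j, CompleteSpace (Fj j)]
    (ιj : ∀ j, E →ₗ[ℂ] Fj j)
    (hinnerj : ∀ j (x y : E), ⟪ιj j x, ιj j y⟫_ℂ = ωs j ⟪x, y⟫_A)
    -- the hypothesis `(ℋ ∩ 𝒦)_{ω_j} = ℋ_{ω_j} ∩ 𝒦_{ω_j}` for each `j`
    (hj : ∀ j, closure (ιj j '' ((H ⊓ K : Submodule ℂ E) : Set E)) =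
      closure (ιj j '' (H : Set E)) ∩ closure (ιj j '' (K : Set E))) :
    -- conclusion: the same holds for every `ω` in the σ-convex hull of `{ω_1, ω_2, …}`
    ∀ (f : ℕ → ℕ) (lam : ℕ → ℝ), (∀ j, 0 < lam j) → HasSum lam 1 →
    ∀ (ω : A →L[ℂ] ℂ), (∀ a : A, HasSum (fun j => (lam j : ℂ) * ωs (f j) a) (ω a)) →
    ∀ (F : Type v) [NormedAddCommGroup F] [InnerProductSpace ℂ F] [CompleteSpace F]
      (ι : E →ₗ[ℂ] F), DenseRange ι → (∀ x y : E, ⟪ι x, ι y⟫_ℂ = ω ⟪x, y⟫_A) →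
      closure (ι '' ((H ⊓ K : Submodule ℂ E) : Set E)) =
        closure (ι '' (H : Set E)) ∩ closure (ι '' (K : Set E)) := by
  intro f lam hlam _ ω hω F _ _ _ ι hdense hinner
  have hsum : HasWeightedInnerSum lam (fun j => ιj (f j)) ι := fun x y => by
    simp only [hinnerj, hinner]
    exact hω _
  have horth_symm (z : E) (hz : ∀ w ∈ H ⊓ K, ⟪w, z⟫_A = 0) (l : E) (hl : l ∈ H ⊓ K) :
      ⟪z, l⟫_A = 0 := by
    rw [← CStarModuleRight.star_inner, hz l hl, star_zero]
  refine (Set.subset_inter (closure_mono (Set.image_mono inf_le_left))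
    (closure_mono (Set.image_mono inf_le_right))).antisymm ?_
  rintro v ⟨hvH, hvK⟩
  refine mem_closure_image_of_forall_inner_eq_zero hdense hcompl
    (fun y hy z hz => by rw [hinner, hz y hy, map_zero]) fun z hz => ?_
  exact hsum.inner_eq_zero_of_mem_closure_inter hlam hdense (fun j => (hj (f j)).superset)
    (fun j l hl => by rw [hinnerj, horth_symm z hz l hl, map_zero]) hvH hvK

/-- **Corollary 2.6.** Let `ℋ, 𝒦` be closed submodules of `ℰ` with `ℋ ∩ 𝒦`
orthogonally complemented, and let `{ω_j}_{j≥1}` be positive linear functionals with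
`sup_j ‖ω_j‖ < ∞` such that
`closure ι_{ω_j}(ℋ ∩ 𝒦) = closure ι_{ω_j}(ℋ) ∩ closure ι_{ω_j}(𝒦)` for each `j`.  Then the
same equality holds for every `ω` in the σ-convex hull of `{ω_1, ω_2, …}`; the
localization of any such `ω` is modelled abstractly by an arbitrary Hilbert space `F` with
a densely-ranged map `ι` satisfying `(ι x, ι y) = ω⟨x,y⟩`. -/
theorem closure_inter_localization_of_sigma_convexHull
    {A E : Type*} [NonUnitalCStarAlgebra A] [PartialOrder A] [StarOrderedRing A]
    [NormedAddCommGroup E] [NormedSpace ℂ E] [SMul Aᵐᵒᵖ E] [CStarModuleRight A E] [CompleteSpace E]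
    -- `ℋ` and `𝒦` are closed submodules of `ℰ`
    (H K : Submodule ℂ E) (hHclosed : IsClosed (H : Set E)) (hKclosed : IsClosed (K : Set E))
    (hHA : ∀ (a : A) (x : E), x ∈ H → x <• a ∈ H)
    (hKA : ∀ (a : A) (x : E), x ∈ K → x <• a ∈ K)
    -- `ℋ ∩ 𝒦` is orthogonally complemented in `ℰ`
    (hcompl : ∀ x : E, ∃ y ∈ H ⊓ K, ∃ z : E,
      (∀ w ∈ H ⊓ K, ⟪w, z⟫_A = 0) ∧ x = y + z)
    -- the positive linear functionals `ω_j`, uniformly bounded in norm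
    (ωs : ℕ → (A →L[ℂ] ℂ))
    (hpos : ∀ j (a : A), 0 ≤ a → 0 ≤ ωs j a)
    (hbdd : ∃ C : ℝ, ∀ j, ‖ωs j‖ ≤ C)
    -- abstract models of the localizations `ℰ_{ω_j}`
    (Fj : ℕ → Type*) [∀ j, NormedAddCommGroup (Fj j)] [∀ j, InnerProductSpace ℂ (Fj j)]
    [∀ j, CompleteSpace (Fj j)]
    (ιj : ∀ j, E →ₗ[ℂ] Fj j) (hιj : ∀ j, DenseRange (ιj j))
    (hinnerj : ∀ j (x y : E), ⟪ιj j x, ιj j y⟫_ℂ = ωs j ⟪x, y⟫_A)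
    -- the hypothesis `(ℋ ∩ 𝒦)_{ω_j} = ℋ_{ω_j} ∩ 𝒦_{ω_j}` for each `j`
    (hj : ∀ j, closure (ιj j '' ((H ⊓ K : Submodule ℂ E) : Set E)) =
      closure (ιj j '' (H : Set E)) ∩ closure (ιj j '' (K : Set E))) :
    -- conclusion: the same holds for every `ω` in the σ-convex hull of `{ω_1, ω_2, …}`
    ∀ (f : ℕ → ℕ) (lam : ℕ → ℝ), (∀ j, 0 < lam j) → HasSum lam 1 →
    ∀ (ω : A →L[ℂ] ℂ), (∀ a : A, HasSum (fun j => (lam j : ℂ) * ωs (f j) a) (ω a)) →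
    ∀ (F : Type v) [NormedAddCommGroup F] [InnerProductSpace ℂ F] [CompleteSpace F]
      (ι : E →ₗ[ℂ] F), DenseRange ι → (∀ x y : E, ⟪ι x, ι y⟫_ℂ = ω ⟪x, y⟫_A) →
      closure (ι '' ((H ⊓ K : Submodule ℂ E) : Set E)) =
        closure (ι '' (H : Set E)) ∩ closure (ι '' (K : Set E)) :=
  closure_inter_localization_of_sigma_convexHull_general H K hcompl ωs Fj ιj hinnerj hj
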